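/- arXiv:1805.01999 — 2 statements merged into one kernel-verified Lean document; each statement's English description precedes it below -/
import Mathlib

section
/- Let 0<q<1. The function g(x) = log Γ_q(x) - x·ψ_q(x) is strictly decreasing on (0,∞) and has a unique zero, which lies in the interval (1,2). -/
open Real

/-- The q-digamma function: ψ_q(x) = -log(1-q) + (log q)·∑_{n=1}^∞ q^{nx}/(1-q^n). -/
noncomputable def qDigamma (q x : ℝ) : ℝ :=
  -Real.log (1 - q) + Real.log q * ∑' n : ℕ, q ^ (((n : ℝ) + 1) * x) / (1 - q ^ (n + 1))

/-- The q-gamma function: Γ_q(x) = (q;q)_∞/(q^x;q)_∞ · (1-q)^{1-x}. -/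
noncomputable def qGamma (q x : ℝ) : ℝ :=
  ((∏' i : ℕ, (1 - q ^ (i + 1))) / ∏' i : ℕ, (1 - q ^ (x + (i : ℝ)))) * (1 - q) ^ (1 - x)

/-- The q-bracket: [x]_q = (1-q^x)/(1-q). -/
noncomputable def qBracket (q x : ℝ) : ℝ := (1 - q ^ x) / (1 - q)

/-! Expanding `log (1 - r qⁱ)` as a power series and summing the geometric series in `i`
turns `g(x) = log Γ_q(x) - x ψ_q(x)` into
`∑_{m ≥ 1} (φ(x log qᵐ) - qᵐ(2 - qᵐ)) / (m (1 - qᵐ))` with `φ(t) = eᵗ(1 - t)`,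
where the constants `qᵐ(2 - qᵐ)` collect the series of `log (1 - q)` and `log (q;q)_∞`.
As `φ'(t) = -t eᵗ`, `φ` increases on `t ≤ 0`, so every term decreases in `x`.
With `y = qᵐ` the numerator is `y (y - 1 - log y) > 0` at `x = 1` and
`2y (φ(log y) - 1) < 0` at `x = 2`. Being monotone, the terms on `[1, 2]` are dominated by
those at `1` and `2`, so `g` is continuous there, and the intermediate value theorem gives
the zero. -/

open Set

lemma one_sub_pow_succ_pos {q : ℝ} (hq0 : 0 ≤ q) (hq1 : q < 1) (m : ℕ) :
    0 < 1 - q ^ (m + 1) :=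
  sub_pos.2 (pow_lt_one₀ hq0 hq1 m.succ_ne_zero)

lemma strictMonoOn_exp_mul_one_sub : StrictMonoOn (fun t => exp t * (1 - t)) (Iic 0) := by
  refine strictMonoOn_of_deriv_pos (convex_Iic 0) (by fun_prop) fun t ht => ?_
  rw [interior_Iic, mem_Iio] at ht
  have hderiv : deriv (fun t => exp t * (1 - t)) t = -t * exp t := by
    rw [deriv_fun_mul (by fun_prop) (by fun_prop), Real.deriv_exp, deriv_const_sub, deriv_id'']
    ring
  rw [hderiv]
  exact mul_pos (neg_pos.2 ht) (exp_pos t)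

lemma summable_pow_div_one_sub_pow {q r : ℝ} (hq0 : 0 ≤ q) (hq1 : q < 1) (hr0 : 0 ≤ r)
    (hr1 : r < 1) : Summable fun m : ℕ => r ^ (m + 1) / (1 - q ^ (m + 1)) := by
  refine Summable.of_nonneg_of_le (fun m => ?_) (fun m => ?_)
    (((summable_nat_add_iff 1).2 (summable_geometric_of_lt_one hr0 hr1)).div_const (1 - q))
  · exact div_nonneg (by positivity) (sub_nonneg.2 (pow_le_one₀ hq0 hq1.le))
  · exact div_le_div_of_nonneg_left (by positivity) (sub_pos.2 hq1)
      (sub_le_sub_left (pow_le_of_le_one hq0 hq1.le m.succ_ne_zero) 1)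

lemma summable_pow_div_mul_one_sub_pow {q r : ℝ} (hq0 : 0 ≤ q) (hq1 : q < 1) (hr0 : 0 ≤ r)
    (hr1 : r < 1) : Summable fun m : ℕ => r ^ (m + 1) / ((m + 1) * (1 - q ^ (m + 1))) := by
  refine Summable.of_nonneg_of_le (fun m => ?_) (fun m => ?_)
    (summable_pow_div_one_sub_pow hq0 hq1 hr0 hr1)
  all_goals have hgap := one_sub_pow_succ_pos hq0 hq1 m
  · positivity
  · rw [mul_comm, ← div_div]
    exact div_le_self (by positivity) (by linarith [m.cast_nonneg (α := ℝ)])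

lemma hasSum_log_one_sub_mul_pow {q r : ℝ} (hq0 : 0 ≤ q) (hq1 : q < 1) (hr0 : 0 ≤ r)
    (hr1 : r < 1) :
    HasSum (fun i : ℕ => log (1 - r * q ^ i))
      (-∑' m : ℕ, r ^ (m + 1) / ((m + 1) * (1 - q ^ (m + 1)))) := by
  let F : ℕ × ℕ → ℝ := fun p => (r * q ^ p.1) ^ (p.2 + 1) / (p.2 + 1)
  have hrow (i : ℕ) : HasSum (fun m => F (i, m)) (-log (1 - r * q ^ i)) := by
    refine Real.hasSum_pow_div_log_of_abs_lt_one (x := r * q ^ i) ?_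
    rw [abs_of_nonneg (by positivity)]
    exact mul_lt_one_of_nonneg_of_lt_one_left hr0 hr1 (pow_le_one₀ hq0 hq1.le)
  have hcol (m : ℕ) :
      HasSum (fun i => F (i, m)) (r ^ (m + 1) / ((m + 1) * (1 - q ^ (m + 1)))) := by
    have hgeom := (hasSum_geometric_of_lt_one (pow_nonneg hq0 (m + 1))
      (sub_pos.1 (one_sub_pow_succ_pos hq0 hq1 m))).mul_left (r ^ (m + 1) / (m + 1))
    rw [show r ^ (m + 1) / ((m + 1) * (1 - q ^ (m + 1)))
      = r ^ (m + 1) / (m + 1) * (1 - q ^ (m + 1))⁻¹ by rw [div_mul_eq_div_div, div_eq_mul_inv]]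
    refine hgeom.congr_fun fun i => ?_
    simp only [F]
    ring
  have hF0 : 0 ≤ F := fun p => by
    simp only [F, Pi.zero_apply]
    positivity
  have hF : Summable F := by
    refine Summable.prod_symm (f := fun p : ℕ × ℕ => F p.swap) ?_
    refine (summable_prod_of_nonneg fun p => hF0 p.swap).2
      ⟨fun m => (hcol m).summable, ?_⟩
    refine Summable.congr ?_ fun m => ((hcol m).tsum_eq).symm
    exact summable_pow_div_mul_one_sub_pow hq0 hq1 hr0 hr1
  have hswap := (Equiv.prodComm ℕ ℕ).hasSum_iff.2 hF.hasSum
  rw [(hswap.prod_fiberwise hcol).tsum_eq]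
  simpa using (hF.hasSum.prod_fiberwise hrow).neg

lemma tprod_one_sub_mul_pow {q r : ℝ} (hq0 : 0 ≤ q) (hq1 : q < 1) (hr0 : 0 ≤ r)
    (hr1 : r < 1) :
    ∏' i : ℕ, (1 - r * q ^ i)
      = exp (-∑' m : ℕ, r ^ (m + 1) / ((m + 1) * (1 - q ^ (m + 1)))) := by
  refine HasProd.tprod_eq ?_
  convert (hasSum_log_one_sub_mul_pow hq0 hq1 hr0 hr1).rexp using 1
  ext i
  exact (exp_log (sub_pos.2
    (mul_lt_one_of_nonneg_of_lt_one_left hr0 hr1 (pow_le_one₀ hq0 hq1.le)))).symm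

lemma log_qGamma_eq {q x : ℝ} (hq0 : 0 < q) (hq1 : q < 1) (hx : 0 < x) :
    log (qGamma q x)
      = ∑' m : ℕ, (q ^ x) ^ (m + 1) / ((m + 1) * (1 - q ^ (m + 1)))
        - ∑' m : ℕ, q ^ (m + 1) / ((m + 1) * (1 - q ^ (m + 1))) + (1 - x) * log (1 - q) := by
  have hnum : ∏' i : ℕ, (1 - q ^ (i + 1)) = ∏' i : ℕ, (1 - q * q ^ i) := by
    simp only [pow_succ']
  have hden : ∏' i : ℕ, (1 - q ^ (x + (i : ℝ))) = ∏' i : ℕ, (1 - q ^ x * q ^ i) := by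
    simp only [rpow_add hq0, rpow_natCast]
  rw [qGamma, hnum, hden, tprod_one_sub_mul_pow hq0.le hq1 hq0.le hq1,
    tprod_one_sub_mul_pow hq0.le hq1 (rpow_nonneg hq0.le x) (rpow_lt_one hq0.le hq1 hx),
    ← exp_sub, log_mul (exp_ne_zero _) (rpow_pos_of_pos (sub_pos.2 hq1) _).ne', log_exp,
    log_rpow (sub_pos.2 hq1)]
  ring

lemma qDigamma_eq {q : ℝ} (hq0 : 0 ≤ q) (x : ℝ) :
    qDigamma q x = -log (1 - q) + log q * ∑' m : ℕ, (q ^ x) ^ (m + 1) / (1 - q ^ (m + 1)) := by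
  simp only [qDigamma, mul_comm _ x, rpow_mul hq0, ← Nat.cast_succ, rpow_natCast]

noncomputable def qGammaDigammaTerm (q x : ℝ) (m : ℕ) : ℝ :=
  (exp (x * log (q ^ (m + 1))) * (1 - x * log (q ^ (m + 1))) - q ^ (m + 1) * (2 - q ^ (m + 1)))
    / ((m + 1) * (1 - q ^ (m + 1)))

lemma hasSum_qGammaDigammaTerm {q x : ℝ} (hq0 : 0 < q) (hq1 : q < 1) (hx : 0 < x) :
    HasSum (qGammaDigammaTerm q x) (log (qGamma q x) - x * qDigamma q x) := by
  have hr0 : 0 ≤ q ^ x := rpow_nonneg hq0.le x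
  have hr1 : q ^ x < 1 := rpow_lt_one hq0.le hq1 hx
  have hlog := Real.hasSum_pow_div_log_of_abs_lt_one (by rwa [abs_of_pos hq0])
  have hsum := (((summable_pow_div_mul_one_sub_pow hq0.le hq1 hr0 hr1).hasSum.sub
    (summable_pow_div_mul_one_sub_pow hq0.le hq1 hq0.le hq1).hasSum).sub hlog).sub
    ((summable_pow_div_one_sub_pow hq0.le hq1 hr0 hr1).hasSum.mul_left (x * log q))
  rw [log_qGamma_eq hq0 hq1 hx, qDigamma_eq hq0.le]
  refine (congrArg (HasSum _) ?_).mpr (hsum.congr_fun fun m => ?_)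
  · ring
  have hgap := one_sub_pow_succ_pos hq0.le hq1 m
  have hexp : exp (x * log (q ^ (m + 1))) = (q ^ x) ^ (m + 1) := by
    rw [log_pow, ← rpow_natCast (q ^ x), ← rpow_mul hq0.le, rpow_def_of_pos hq0]
    push_cast
    ring_nf
  rw [qGammaDigammaTerm, hexp, log_pow]
  push_cast
  field_simp
  ring

lemma qGammaDigammaTerm_strictAntiOn {q : ℝ} (hq0 : 0 < q) (hq1 : q < 1) (m : ℕ) :
    StrictAntiOn (fun x => qGammaDigammaTerm q x m) (Ici 0) := by
  intro x hx y hy hxy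
  have hgap := one_sub_pow_succ_pos hq0.le hq1 m
  have hlog : log (q ^ (m + 1)) < 0 := log_neg (by positivity) (sub_pos.1 hgap)
  refine div_lt_div_of_pos_right (sub_lt_sub_right ?_ _) (by positivity)
  exact strictMonoOn_exp_mul_one_sub (mem_Iic.2 (by nlinarith [mem_Ici.1 hy]))
    (mem_Iic.2 (by nlinarith [mem_Ici.1 hx])) (by nlinarith)

lemma qGammaDigammaTerm_one_pos {q : ℝ} (hq0 : 0 < q) (hq1 : q < 1) (m : ℕ) :
    0 < qGammaDigammaTerm q 1 m := by
  have hy0 : 0 < q ^ (m + 1) := by positivity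
  have hy1 : q ^ (m + 1) < 1 := pow_lt_one₀ hq0.le hq1 m.succ_ne_zero
  have hlog := log_lt_sub_one_of_pos hy0 hy1.ne
  rw [qGammaDigammaTerm, one_mul, exp_log hy0]
  refine div_pos ?_ (mul_pos (by positivity) (sub_pos.2 hy1))
  nlinarith

lemma qGammaDigammaTerm_two_neg {q : ℝ} (hq0 : 0 < q) (hq1 : q < 1) (m : ℕ) :
    qGammaDigammaTerm q 2 m < 0 := by
  have hy0 : 0 < q ^ (m + 1) := by positivity
  have hy1 : q ^ (m + 1) < 1 := pow_lt_one₀ hq0.le hq1 m.succ_ne_zero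
  have hlog : log (q ^ (m + 1)) < 0 := log_neg hy0 hy1
  have hφ : exp (log (q ^ (m + 1))) * (1 - log (q ^ (m + 1))) < 1 := by
    simpa using strictMonoOn_exp_mul_one_sub (mem_Iic.2 hlog.le) (mem_Iic.2 le_rfl) hlog
  rw [exp_log hy0] at hφ
  have hexp : exp (2 * log (q ^ (m + 1))) = q ^ (m + 1) * q ^ (m + 1) := by
    rw [two_mul, exp_add, exp_log hy0]
  rw [qGammaDigammaTerm, hexp]
  refine div_neg_of_neg_of_pos ?_ (mul_pos (by positivity) (sub_pos.2 hy1))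
  nlinarith

lemma continuousOn_log_qGamma_sub_mul_qDigamma {q : ℝ} (hq0 : 0 < q) (hq1 : q < 1) :
    ContinuousOn (fun x => log (qGamma q x) - x * qDigamma q x) (Icc 1 2) := by
  have hsum (x : ℝ) (hx : 1 ≤ x) := hasSum_qGammaDigammaTerm hq0 hq1 (one_pos.trans_le hx)
  have hanti (m : ℕ) := (qGammaDigammaTerm_strictAntiOn hq0 hq1 m).antitoneOn
  have hcont : ContinuousOn (fun x => ∑' m, qGammaDigammaTerm q x m) (Icc 1 2) := by
    refine continuousOn_tsum (fun m => by unfold qGammaDigammaTerm; fun_prop)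
      ((hsum 2 one_le_two).summable.abs.add (hsum 1 le_rfl).summable.abs) fun m x hx => ?_
    have hx0 : x ∈ Ici (0 : ℝ) := zero_le_one.trans hx.1
    refine (abs_le_max_abs_abs (hanti m hx0 (mem_Ici.2 zero_le_two) hx.2)
      (hanti m (mem_Ici.2 zero_le_one) hx0 hx.1)).trans ?_
    exact max_le_add_of_nonneg (abs_nonneg _) (abs_nonneg _)
  exact hcont.congr fun x hx => (hsum x hx.1).tsum_eq.symm

lemma strictAntiOn_log_qGamma_sub_mul_qDigamma {q : ℝ} (hq0 : 0 < q) (hq1 : q < 1) :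
    StrictAntiOn (fun x => log (qGamma q x) - x * qDigamma q x) (Ioi 0) := by
  intro x hx y hy hxy
  have hterm (m : ℕ) := qGammaDigammaTerm_strictAntiOn hq0 hq1 m (Ioi_subset_Ici_self hx)
    (Ioi_subset_Ici_self hy) hxy
  exact hasSum_lt (fun m => (hterm m).le) (hterm 0) (hasSum_qGammaDigammaTerm hq0 hq1 hy)
    (hasSum_qGammaDigammaTerm hq0 hq1 hx)

lemma log_qGamma_sub_mul_qDigamma_one_pos {q : ℝ} (hq0 : 0 < q) (hq1 : q < 1) :
    0 < log (qGamma q 1) - 1 * qDigamma q 1 :=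
  hasSum_lt (fun m => (qGammaDigammaTerm_one_pos hq0 hq1 m).le)
    (qGammaDigammaTerm_one_pos hq0 hq1 0) hasSum_zero (hasSum_qGammaDigammaTerm hq0 hq1 one_pos)

lemma log_qGamma_sub_mul_qDigamma_two_neg {q : ℝ} (hq0 : 0 < q) (hq1 : q < 1) :
    log (qGamma q 2) - 2 * qDigamma q 2 < 0 :=
  hasSum_lt (fun m => (qGammaDigammaTerm_two_neg hq0 hq1 m).le)
    (qGammaDigammaTerm_two_neg hq0 hq1 0) (hasSum_qGammaDigammaTerm hq0 hq1 two_pos) hasSum_zero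

/-- g(x) = log Γ_q(x) - x ψ_q(x) is strictly decreasing on (0,∞) with a
unique zero, which lies in (1,2). -/
theorem log_qGamma_sub_mul_qDigamma_strictAnti (q : ℝ) (hq0 : 0 < q) (hq1 : q < 1) :
    StrictAntiOn (fun x => Real.log (qGamma q x) - x * qDigamma q x) (Set.Ioi 0) ∧
    ∃ x₀ ∈ Set.Ioo (1 : ℝ) 2,
      Real.log (qGamma q x₀) - x₀ * qDigamma q x₀ = 0 ∧
      ∀ x ∈ Set.Ioi (0 : ℝ), Real.log (qGamma q x) - x * qDigamma q x = 0 → x = x₀ := by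
  have hanti := strictAntiOn_log_qGamma_sub_mul_qDigamma hq0 hq1
  obtain ⟨x₀, hx₀, hzero⟩ := intermediate_value_Ioo' one_le_two
    (continuousOn_log_qGamma_sub_mul_qDigamma hq0 hq1)
    ⟨log_qGamma_sub_mul_qDigamma_two_neg hq0 hq1, log_qGamma_sub_mul_qDigamma_one_pos hq0 hq1⟩
  exact ⟨hanti, x₀, hx₀, hzero, fun x hx hx_zero =>
    hanti.injOn hx (one_pos.trans hx₀.1) (hx_zero.trans hzero.symm)⟩
end

section
/- Let 0<q<1, let x>0 and let a ∈ (0,1). Then ([x]_q)^{1-a} < Γ_q(x+1)/Γ_q(x+a) < ([x+a]_q)^{1-a}. -/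
open Real

lemma one_sub_rpow_pos {q : ℝ} (hq0 : 0 < q) (hq1 : q < 1) {t : ℝ} (ht : 0 < t) :
    0 < 1 - q ^ t := by
  have := Real.rpow_lt_one hq0.le hq1 ht
  linarith

lemma hasDerivAt_qlog {q : ℝ} (hq0 : 0 < q) (hq1 : q < 1) {t : ℝ} (ht : 0 < t) :
    HasDerivAt (fun t : ℝ => Real.log (1 - q ^ t))
      (-(q ^ t * Real.log q) / (1 - q ^ t)) t := by
  have h1 : HasDerivAt (fun t : ℝ => 1 - q ^ t) (-(q ^ t * Real.log q)) t :=
    (hasStrictDerivAt_const_rpow hq0 t).hasDerivAt.const_sub 1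
  exact h1.log (one_sub_rpow_pos hq0 hq1 ht).ne'

lemma hasDerivAt_qlog' {q : ℝ} (hq0 : 0 < q) (hq1 : q < 1) {t : ℝ} (ht : 0 < t) :
    HasDerivAt (fun t : ℝ => -(q ^ t * Real.log q) / (1 - q ^ t))
      (-(q ^ t * Real.log q ^ 2) / (1 - q ^ t) ^ 2) t := by
  have hd : HasDerivAt (fun t : ℝ => 1 - q ^ t) (-(q ^ t * Real.log q)) t :=
    (hasStrictDerivAt_const_rpow hq0 t).hasDerivAt.const_sub 1
  have hc : HasDerivAt (fun t : ℝ => -(q ^ t * Real.log q))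
      (-(q ^ t * Real.log q * Real.log q)) t :=
    (((hasStrictDerivAt_const_rpow hq0 t).hasDerivAt).mul_const (Real.log q)).neg
  have : HasDerivAt (fun t : ℝ => -(q ^ t * Real.log q) / (1 - q ^ t)) _ t :=
    hc.div hd (one_sub_rpow_pos hq0 hq1 ht).ne'
  convert this using 1
  ring

lemma qlog_strictConcaveOn {q : ℝ} (hq0 : 0 < q) (hq1 : q < 1) :
    StrictConcaveOn ℝ (Set.Ioi 0) (fun t : ℝ => Real.log (1 - q ^ t)) := by
  apply strictConcaveOn_of_deriv2_neg (convex_Ioi 0)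
  · intro t ht
    exact (hasDerivAt_qlog hq0 hq1 ht).continuousAt.continuousWithinAt
  · intro t ht
    rw [interior_Ioi] at ht
    have hder : deriv (fun t : ℝ => Real.log (1 - q ^ t)) =ᶠ[nhds t]
        (fun t : ℝ => -(q ^ t * Real.log q) / (1 - q ^ t)) := by
      filter_upwards [isOpen_Ioi.mem_nhds ht] with s hs
      exact (hasDerivAt_qlog hq0 hq1 hs).deriv
    have heq : deriv^[2] (fun t : ℝ => Real.log (1 - q ^ t)) t
        = -(q ^ t * Real.log q ^ 2) / (1 - q ^ t) ^ 2 := by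
      simp only [Function.iterate_succ, Function.iterate_zero, Function.comp_apply, id_eq]
      rw [Filter.EventuallyEq.deriv_eq hder]
      exact (hasDerivAt_qlog' hq0 hq1 ht).deriv
    rw [heq]
    have hL : Real.log q ≠ 0 := by
      have := Real.log_neg hq0 hq1
      linarith
    have h1 : 0 < q ^ t := Real.rpow_pos_of_pos hq0 t
    have h2 : 0 < 1 - q ^ t := one_sub_rpow_pos hq0 hq1 ht
    have h3 : 0 < q ^ t * Real.log q ^ 2 := by positivity
    have h4 : 0 < (1 - q ^ t) ^ 2 := by positivity
    exact div_neg_of_neg_of_pos (by linarith) h4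

lemma qlog_summable {q : ℝ} (hq0 : 0 < q) (hq1 : q < 1) {y : ℝ} (hy : 0 < y) :
    Summable (fun i : ℕ => Real.log (1 - q ^ (y + (i : ℝ)))) := by
  rw [← summable_neg_iff]
  have hyi : ∀ i : ℕ, 0 < y + (i : ℝ) := fun i => by positivity
  apply Summable.of_nonneg_of_le (f := fun i : ℕ => (1 / (1 - q ^ y)) * q ^ y * q ^ (i : ℕ))
  · intro i
    simp only [neg_nonneg]
    exact Real.log_nonpos (by linarith [one_sub_rpow_pos hq0 hq1 (hyi i)])
      (by linarith [Real.rpow_pos_of_pos hq0 (y + (i : ℝ))])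
  · intro i
    have h1 : 0 < 1 - q ^ (y + (i : ℝ)) := one_sub_rpow_pos hq0 hq1 (hyi i)
    have h2 : 0 < q ^ (y + (i : ℝ)) := Real.rpow_pos_of_pos hq0 _
    have h3 : -Real.log (1 - q ^ (y + (i : ℝ))) = Real.log (1 / (1 - q ^ (y + (i : ℝ)))) := by
      rw [Real.log_div one_ne_zero h1.ne', Real.log_one]; ring
    rw [h3]
    have h4 : Real.log (1 / (1 - q ^ (y + (i : ℝ)))) ≤ 1 / (1 - q ^ (y + (i : ℝ))) - 1 :=
      Real.log_le_sub_one_of_pos (by positivity)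
    have hsplit : q ^ (y + (i : ℝ)) = q ^ y * q ^ (i : ℕ) := by
      rw [Real.rpow_add hq0, Real.rpow_natCast]
    have h5 : 1 / (1 - q ^ (y + (i : ℝ))) - 1 = q ^ (y + (i : ℝ)) / (1 - q ^ (y + (i : ℝ))) := by
      field_simp
      ring
    have h6 : q ^ (y + (i : ℝ)) ≤ q ^ y := by
      rw [hsplit]
      nlinarith [pow_le_one₀ hq0.le hq1.le (n := i), Real.rpow_pos_of_pos hq0 y]
    have h7 : 1 - q ^ y ≤ 1 - q ^ (y + (i : ℝ)) := by linarith
    have hy1 : 0 < 1 - q ^ y := one_sub_rpow_pos hq0 hq1 hy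
    calc Real.log (1 / (1 - q ^ (y + (i : ℝ)))) ≤ q ^ (y + (i : ℝ)) / (1 - q ^ (y + (i : ℝ))) := by
          rw [← h5]; exact h4
      _ ≤ q ^ (y + (i : ℝ)) / (1 - q ^ y) := by
          apply div_le_div_of_nonneg_left h2.le hy1 h7
      _ = 1 / (1 - q ^ y) * q ^ y * q ^ (i : ℕ) := by
          rw [hsplit]; ring
  · exact (summable_geometric_of_lt_one hq0.le hq1).mul_left _

noncomputable def qS (q y : ℝ) : ℝ := ∑' i : ℕ, Real.log (1 - q ^ (y + (i : ℝ)))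

lemma qS_succ {q : ℝ} (hq0 : 0 < q) (hq1 : q < 1) {y : ℝ} (hy : 0 < y) :
    qS q y = Real.log (1 - q ^ y) + qS q (y + 1) := by
  rw [qS, Summable.tsum_eq_zero_add (qlog_summable hq0 hq1 hy)]
  congr 1
  · norm_num
  · rw [qS]
    congr 1; funext i; push_cast; ring_nf

lemma qS_prod {q : ℝ} (hq0 : 0 < q) (hq1 : q < 1) {y : ℝ} (hy : 0 < y) :
    (∏' i : ℕ, (1 - q ^ (y + (i : ℝ)))) = Real.exp (qS q y) := by
  have h := (qlog_summable hq0 hq1 hy).hasSum.rexp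
  have he : (rexp ∘ fun i : ℕ => Real.log (1 - q ^ (y + (i : ℝ))))
      = fun i : ℕ => 1 - q ^ (y + (i : ℝ)) := by
    funext i
    exact Real.exp_log (one_sub_rpow_pos hq0 hq1 (by positivity))
  rw [he] at h
  exact h.tprod_eq

lemma qS_concave {q : ℝ} (hq0 : 0 < q) (hq1 : q < 1) {y b : ℝ} (hy : 0 < y)
    (hb0 : 0 < b) (hb1 : b < 1) :
    b * qS q y + (1 - b) * qS q (y + 1) < qS q (y + (1 - b)) := by
  have hy1 : (0:ℝ) < y + 1 := by linarith
  have hyb : (0:ℝ) < y + (1 - b) := by linarith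
  have hsum1 := qlog_summable hq0 hq1 hy
  have hsum2 := qlog_summable hq0 hq1 hy1
  have hsum3 := qlog_summable hq0 hq1 hyb
  have hconc := qlog_strictConcaveOn hq0 hq1
  have hterm : ∀ i : ℕ,
      b * Real.log (1 - q ^ (y + (i : ℝ))) + (1 - b) * Real.log (1 - q ^ (y + 1 + (i : ℝ)))
        < Real.log (1 - q ^ (y + (1 - b) + (i : ℝ))) := by
    intro i
    have hp : (y + (i : ℝ)) ∈ Set.Ioi (0:ℝ) := by
      simp only [Set.mem_Ioi]; positivity
    have hr : (y + 1 + (i : ℝ)) ∈ Set.Ioi (0:ℝ) := by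
      simp only [Set.mem_Ioi]; positivity
    have hne : (y + (i : ℝ)) ≠ (y + 1 + (i : ℝ)) := by intro h; linarith [congrArg id h]
    have := hconc.2 hp hr hne hb0 (by linarith : (0:ℝ) < 1 - b) (by ring)
    simp only [smul_eq_mul] at this
    have harg : b * (y + (i : ℝ)) + (1 - b) * (y + 1 + (i : ℝ)) = y + (1 - b) + (i : ℝ) := by
      ring
    rwa [harg] at this
  have hlt : (∑' i : ℕ, (b * Real.log (1 - q ^ (y + (i : ℝ)))
        + (1 - b) * Real.log (1 - q ^ (y + 1 + (i : ℝ)))))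
      < ∑' i : ℕ, Real.log (1 - q ^ (y + (1 - b) + (i : ℝ))) := by
    exact Summable.tsum_lt_tsum (i := 0) (fun i => (hterm i).le) (hterm 0)
      ((hsum1.mul_left b).add (hsum2.mul_left (1 - b))) hsum3
  calc b * qS q y + (1 - b) * qS q (y + 1)
      = ∑' i : ℕ, (b * Real.log (1 - q ^ (y + (i : ℝ)))
        + (1 - b) * Real.log (1 - q ^ (y + 1 + (i : ℝ)))) := by
        rw [Summable.tsum_add (hsum1.mul_left b) (hsum2.mul_left (1 - b)), tsum_mul_left, tsum_mul_left]
        rfl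
    _ < qS q (y + (1 - b)) := hlt

/-- ([x]_q)^{1-a} < Γ_q(x+1)/Γ_q(x+a) < ([x+a]_q)^{1-a}. -/
theorem qGamma_gautschi (q : ℝ) (hq0 : 0 < q) (hq1 : q < 1)
    (x a : ℝ) (hx : 0 < x) (ha : a ∈ Set.Ioo (0 : ℝ) 1) :
    qBracket q x ^ (1 - a) < qGamma q (x + 1) / qGamma q (x + a) ∧
    qGamma q (x + 1) / qGamma q (x + a) < qBracket q (x + a) ^ (1 - a) := by
  obtain ⟨ha0, ha1⟩ := ha
  have hx1 : (0:ℝ) < x + 1 := by linarith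
  have hxa : (0:ℝ) < x + a := by linarith
  have h1q : (0:ℝ) < 1 - q := by linarith
  have h1x : 0 < 1 - q ^ x := one_sub_rpow_pos hq0 hq1 hx
  have h1xa : 0 < 1 - q ^ (x + a) := one_sub_rpow_pos hq0 hq1 hxa
  -- product identities
  have hQ1 : (∏' i : ℕ, (1 - q ^ (x + 1 + (i : ℝ)))) = Real.exp (qS q (x + 1)) :=
    qS_prod hq0 hq1 hx1
  have hQa : (∏' i : ℕ, (1 - q ^ (x + a + (i : ℝ)))) = Real.exp (qS q (x + a)) :=
    qS_prod hq0 hq1 hxa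
  have hP : (∏' i : ℕ, (1 - q ^ (i + 1))) = Real.exp (qS q 1) := by
    rw [← qS_prod hq0 hq1 one_pos]
    congr 1; funext i
    rw [← Real.rpow_natCast q (i + 1)]
    congr 1; push_cast; ring
  -- ratio as exp
  have hratio : qGamma q (x + 1) / qGamma q (x + a)
      = Real.exp (qS q (x + a) - qS q (x + 1) + (a - 1) * Real.log (1 - q)) := by
    rw [qGamma, qGamma, hQ1, hQa, hP,
      Real.rpow_def_of_pos h1q (1 - (x + 1)), Real.rpow_def_of_pos h1q (1 - (x + a))]
    rw [div_mul_eq_mul_div, div_mul_eq_mul_div]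
    simp only [← Real.exp_add, ← Real.exp_sub]
    congr 1; ring
  -- bracket powers as exp
  have hbrx : qBracket q x ^ (1 - a)
      = Real.exp ((Real.log (1 - q ^ x) - Real.log (1 - q)) * (1 - a)) := by
    rw [qBracket, Real.rpow_def_of_pos (div_pos h1x h1q), Real.log_div h1x.ne' h1q.ne']
  have hbrxa : qBracket q (x + a) ^ (1 - a)
      = Real.exp ((Real.log (1 - q ^ (x + a)) - Real.log (1 - q)) * (1 - a)) := by
    rw [qBracket, Real.rpow_def_of_pos (div_pos h1xa h1q), Real.log_div h1xa.ne' h1q.ne']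
  -- key inequalities
  have key1 : (1 - a) * qS q x + a * qS q (x + 1) < qS q (x + a) := by
    have := qS_concave hq0 hq1 hx (by linarith : (0:ℝ) < 1 - a) (by linarith)
    have h2 : x + (1 - (1 - a)) = x + a := by ring
    rw [h2] at this
    linarith
  have key2 : a * qS q (x + a) + (1 - a) * qS q (x + a + 1) < qS q (x + 1) := by
    have := qS_concave hq0 hq1 hxa ha0 ha1
    have h2 : x + a + (1 - a) = x + 1 := by ring
    rw [h2] at this
    linarith
  have hsx : qS q x = Real.log (1 - q ^ x) + qS q (x + 1) := qS_succ hq0 hq1 hx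
  have hsxa : qS q (x + a) = Real.log (1 - q ^ (x + a)) + qS q (x + a + 1) :=
    qS_succ hq0 hq1 hxa
  constructor
  · rw [hratio, hbrx]
    apply Real.exp_lt_exp.2
    nlinarith [key1, hsx]
  · rw [hratio, hbrxa]
    apply Real.exp_lt_exp.2
    nlinarith [key2, hsxa]
end
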